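/- Let (Ŝ, B̂) be any solution of the dirty-model program, and suppose λ_b/λ_s is not an integer. Then every row of Ŝ has strictly fewer than λ_b/λ_s nonzero entries (i.e., ‖ŝ_j‖₀ < λ_b/λ_s for all j), and for every j ∈ RowSupp(B̂) the set M_j(B̂) has strictly more than λ_b/λ_s elements. -/

import Mathlib

/-!
The objective is a loss depending on `S + B` only, plus a sum of row penalties
`λ_s ‖s‖₁ + λ_b ‖b‖_∞`; hence at a solution every row `(ŝ_j, b̂_j)` is an optimal way of
splitting the vector `ŝ_j + b̂_j`. Shrinking every nonzero entry of `ŝ_j` by a small `ε`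
towards zero and adding the difference to `b̂_j` saves `λ_s ε ‖ŝ_j‖₀` and costs at most
`λ_b ε`. Moving `ε` from every entry of `b̂_j` of maximal magnitude into `ŝ_j` saves `λ_b ε`
and costs at most `λ_s ε |M_j(B̂)|`. This gives
`‖ŝ_j‖₀ ≤ λ_b/λ_s ≤ |M_j(B̂)|`, and both inequalities are strict because `λ_b/λ_s` is not an
integer.
-/

open scoped BigOperators Classical

noncomputable section

/-- The objective of the dirty-model program:
`(1/(2n)) Σ_k ‖y^(k) − X^(k)(s^(k) + b^(k))‖₂² + λ_s ‖S‖_{1,1} + λ_b ‖B‖_{1,∞}`. -/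
def dirtyObj (n p r : ℕ) (X : Fin r → Matrix (Fin n) (Fin p) ℝ)
    (y : Fin r → Fin n → ℝ) (lamS lamB : ℝ)
    (S B : Matrix (Fin p) (Fin r) ℝ) : ℝ :=
  (1 / (2 * (n : ℝ))) *
      ∑ k, ∑ i, (y k i - ∑ j, X k i j * (S j k + B j k)) ^ 2
    + lamS * (∑ j, ∑ k, |S j k|)
    + lamB * (∑ j, ⨆ k, |B j k|)

/-- `(Ŝ, B̂)` is a solution (global minimizer) of the dirty-model program. -/
def IsDirtySol (n p r : ℕ) (X : Fin r → Matrix (Fin n) (Fin p) ℝ)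
    (y : Fin r → Fin n → ℝ) (lamS lamB : ℝ)
    (Shat Bhat : Matrix (Fin p) (Fin r) ℝ) : Prop :=
  ∀ S B : Matrix (Fin p) (Fin r) ℝ,
    dirtyObj n p r X y lamS lamB Shat Bhat ≤ dirtyObj n p r X y lamS lamB S B

/-- `M_j(M)`: the set of column indices attaining the (positive) maximum magnitude
in row `j` of `M`. -/
def maxMagSet {p r : ℕ} (M : Matrix (Fin p) (Fin r) ℝ) (j : Fin p) : Finset (Fin r) :=
  Finset.univ.filter fun k => |M j k| = (⨆ l, |M j l|) ∧ 0 < |M j k|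

open Filter Topology Finset

lemma exists_pos_forall_le_of_pos {ι : Type*} [Finite ι] {P : ι → Prop} {f : ι → ℝ}
    (hf : ∀ k, P k → 0 < f k) : ∃ ε > 0, ∀ k, P k → ε ≤ f k := by
  have h : ∀ᶠ ε in 𝓝[>] (0 : ℝ), ∀ k, P k → ε ≤ f k := by
    refine eventually_all.2 fun k => ?_
    by_cases hk : P k
    · exact ((eventually_le_nhds (hf k hk)).filter_mono nhdsWithin_le_nhds).mono
        fun _ h _ => h
    · exact Eventually.of_forall fun _ h => absurd h hk
  obtain ⟨ε, hε, hpos⟩ := (h.and self_mem_nhdsWithin).exists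
  exact ⟨ε, hpos, hε⟩

namespace Real

lemma abs_sub_mul_sign_of_le {x ε : ℝ} (hx : x ≠ 0) (hε : ε ≤ |x|) :
    |x - ε * sign x| = |x| - ε := by
  rcases hx.lt_or_gt with hx | hx
  · rw [sign_of_neg hx, abs_of_neg hx] at *
    rw [abs_of_nonpos (by linarith)]
    ring
  · rw [sign_of_pos hx, abs_of_pos hx] at *
    rw [abs_of_nonneg (by linarith)]
    ring

lemma abs_mul_sign_le (ε x : ℝ) : |ε * sign x| ≤ |ε| := by
  rw [abs_mul]
  rcases sign_apply_eq x with h | h | h <;> simp [h]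

end Real

section RowSplit

variable {ι : Type*} [Fintype ι]

def rowPenalty (lamS lamB : ℝ) (s b : ι → ℝ) : ℝ :=
  lamS * ∑ k, |s k| + lamB * ⨆ k, |b k|

def IsOptimalSplit (lamS lamB : ℝ) (s b : ι → ℝ) : Prop :=
  ∀ s' b', s' + b' = s + b → rowPenalty lamS lamB s b ≤ rowPenalty lamS lamB s' b'

variable {lamS lamB : ℝ} {s b : ι → ℝ}

theorem IsOptimalSplit.card_support_mul_le (h : IsOptimalSplit lamS lamB s b)
    (hlamB : 0 ≤ lamB) : #{k | s k ≠ 0} * lamS ≤ lamB := by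
  obtain ⟨ε, hε, hεs⟩ := exists_pos_forall_le_of_pos (P := fun k => s k ≠ 0)
    (f := fun k => |s k|) fun k => abs_pos.2
  set δ : ι → ℝ := fun k => ε * Real.sign (s k)
  have hsplit := h (s - δ) (b + δ) (by abel)
  have hs : ∑ k, |(s - δ) k| = ∑ k, |s k| - #{k | s k ≠ 0} * ε := by
    have hpt : ∀ k, |(s - δ) k| = |s k| - if s k ≠ 0 then ε else 0 := by
      intro k
      by_cases hk : s k = 0
      · simp [δ, hk]
      · rw [if_pos hk, Pi.sub_apply, Real.abs_sub_mul_sign_of_le hk (hεs k hk)]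
    rw [sum_congr rfl fun k _ => hpt k, sum_sub_distrib, ← sum_filter, sum_const, nsmul_eq_mul]
  have hb : ⨆ k, |(b + δ) k| ≤ (⨆ k, |b k|) + ε := by
    refine Real.iSup_le (fun k => ?_)
      (add_nonneg (Real.iSup_nonneg fun _ => abs_nonneg _) hε.le)
    calc |(b + δ) k| ≤ |b k| + |δ k| := abs_add_le _ _
      _ ≤ (⨆ k, |b k|) + ε := add_le_add (le_ciSup (Finite.bddAbove_range fun l => |b l|) k)
          ((Real.abs_mul_sign_le ε _).trans_eq (abs_of_pos hε))
  unfold rowPenalty at hsplit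
  rw [hs] at hsplit
  have := mul_le_mul_of_nonneg_left hb hlamB
  exact le_of_mul_le_mul_right (by linarith) hε

theorem IsOptimalSplit.le_card_maxMag_mul (h : IsOptimalSplit lamS lamB s b)
    (hlamS : 0 ≤ lamS) (hlamB : 0 ≤ lamB) (hb : ∃ k, b k ≠ 0) :
    lamB ≤ #{k | |b k| = (⨆ l, |b l|) ∧ 0 < |b k|} * lamS := by
  set t := ⨆ l, |b l|
  set M : Finset ι := {k | |b k| = t ∧ 0 < |b k|}
  have hle : ∀ k, |b k| ≤ t := le_ciSup (Finite.bddAbove_range fun l => |b l|)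
  obtain ⟨k₀, hk₀⟩ := hb
  have ht : 0 < t := (abs_pos.2 hk₀).trans_le (hle k₀)
  have hM : ∀ k, k ∈ M ↔ |b k| = t := fun k => by
    simp only [M, mem_filter, mem_univ, true_and]
    exact ⟨And.left, fun hk => ⟨hk, hk ▸ ht⟩⟩
  obtain ⟨ε₀, hε₀, hgap⟩ := exists_pos_forall_le_of_pos (P := fun k => k ∉ M)
    (f := fun k => t - |b k|) fun k hk => sub_pos.2 ((hle k).lt_of_ne (mt (hM k).2 hk))
  set ε := min ε₀ t
  have hε : 0 < ε := lt_min hε₀ ht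
  set δ : ι → ℝ := fun k => if k ∈ M then ε * Real.sign (b k) else 0
  have hsplit := h (s + δ) (b - δ) (by abel)
  have hs : ∑ k, |(s + δ) k| ≤ ∑ k, |s k| + #M * ε := by
    have hpt : ∀ k, |(s + δ) k| ≤ |s k| + if k ∈ M then ε else 0 := fun k => by
      refine (abs_add_le _ _).trans (add_le_add_right ?_ _)
      by_cases hk : k ∈ M
      · simpa [δ, hk, abs_of_pos hε] using Real.abs_mul_sign_le ε (b k)
      · simp [δ, hk]
    calc _ ≤ ∑ k, (|s k| + if k ∈ M then ε else 0) := sum_le_sum fun k _ => hpt k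
      _ = _ := by rw [sum_add_distrib, sum_ite_mem, univ_inter, sum_const, nsmul_eq_mul]
  have hb : ⨆ k, |(b - δ) k| ≤ t - ε := by
    refine Real.iSup_le (fun k => ?_) (sub_nonneg.2 (min_le_right _ _))
    by_cases hk : k ∈ M
    · have hbk : |b k| = t := (hM k).1 hk
      simp only [Pi.sub_apply, δ, if_pos hk]
      rw [Real.abs_sub_mul_sign_of_le (abs_pos.1 (hbk ▸ ht)) (hbk ▸ min_le_right _ _), hbk]
    · simp only [Pi.sub_apply, δ, if_neg hk, sub_zero]
      linarith [hgap k hk, min_le_left ε₀ t]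
  unfold rowPenalty at hsplit
  have := mul_le_mul_of_nonneg_left hs hlamS
  have := mul_le_mul_of_nonneg_left hb hlamB
  exact le_of_mul_le_mul_right (by linarith) hε

end RowSplit

def dirtyLoss (n p r : ℕ) (X : Fin r → Matrix (Fin n) (Fin p) ℝ)
    (y : Fin r → Fin n → ℝ) (W : Matrix (Fin p) (Fin r) ℝ) : ℝ :=
  (1 / (2 * (n : ℝ))) * ∑ k, ∑ i, (y k i - ∑ j, X k i j * W j k) ^ 2

lemma dirtyObj_eq_dirtyLoss_add (n p r : ℕ) (X : Fin r → Matrix (Fin n) (Fin p) ℝ)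
    (y : Fin r → Fin n → ℝ) (lamS lamB : ℝ) (S B : Matrix (Fin p) (Fin r) ℝ) :
    dirtyObj n p r X y lamS lamB S B
      = dirtyLoss n p r X y (S + B) + ∑ j, rowPenalty lamS lamB (S j) (B j) := by
  simp only [dirtyObj, dirtyLoss, rowPenalty, Matrix.add_apply, sum_add_distrib, mul_sum]
  ring

lemma IsDirtySol.isOptimalSplit {n p r : ℕ} {X : Fin r → Matrix (Fin n) (Fin p) ℝ}
    {y : Fin r → Fin n → ℝ} {lamS lamB : ℝ} {Shat Bhat : Matrix (Fin p) (Fin r) ℝ}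
    (hsol : IsDirtySol n p r X y lamS lamB Shat Bhat) (j : Fin p) :
    IsOptimalSplit lamS lamB (Shat j) (Bhat j) := by
  intro s b hsb
  have h := hsol (Shat.updateRow j s) (Bhat.updateRow j b)
  have hsum : Shat.updateRow j s + Bhat.updateRow j b = Shat + Bhat := by
    ext i k
    rcases eq_or_ne i j with rfl | hi
    · simpa [Matrix.updateRow_self] using congrFun hsb k
    · simp [Matrix.updateRow_ne hi]
  have hrows : ∀ S B : Matrix (Fin p) (Fin r) ℝ, ∑ i, rowPenalty lamS lamB (S i) (B i)
      = rowPenalty lamS lamB (S j) (B j) + ∑ i ∈ univ.erase j, rowPenalty lamS lamB (S i) (B i) :=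
    fun S B => (add_sum_erase _ _ (mem_univ j)).symm
  have hothers : ∑ i ∈ univ.erase j, rowPenalty lamS lamB (Shat.updateRow j s i)
      (Bhat.updateRow j b i) = ∑ i ∈ univ.erase j, rowPenalty lamS lamB (Shat i) (Bhat i) :=
    sum_congr rfl fun i hi => by
      rw [Matrix.updateRow_ne (ne_of_mem_erase hi), Matrix.updateRow_ne (ne_of_mem_erase hi)]
  rw [dirtyObj_eq_dirtyLoss_add, dirtyObj_eq_dirtyLoss_add, hsum, hrows,
    hrows (Shat.updateRow j s), Matrix.updateRow_self, Matrix.updateRow_self, hothers] at h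
  linarith

theorem dirty_model_row_card_bounds_general
    (n p r : ℕ)
    (X : Fin r → Matrix (Fin n) (Fin p) ℝ) (y : Fin r → Fin n → ℝ)
    (lamS lamB : ℝ) (hlamS : 0 < lamS) (hlamB : 0 < lamB)
    (hnotint : ¬ ∃ m : ℤ, lamB / lamS = (m : ℝ))
    (Shat Bhat : Matrix (Fin p) (Fin r) ℝ)
    (hsol : IsDirtySol n p r X y lamS lamB Shat Bhat) :
    (∀ j : Fin p,
      ((Finset.univ.filter fun k => Shat j k ≠ 0).card : ℝ) < lamB / lamS) ∧
    (∀ j : Fin p, (∃ k, Bhat j k ≠ 0) →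
      lamB / lamS < (maxMagSet Bhat j).card) := by
  have hne : ∀ m : ℕ, lamB / lamS ≠ m := fun m h => hnotint ⟨m, by exact_mod_cast h⟩
  refine ⟨fun j => ?_, fun j hj => ?_⟩
  · have h := (hsol.isOptimalSplit j).card_support_mul_le hlamB.le
    exact ((le_div_iff₀ hlamS).2 h).lt_of_ne (hne _).symm
  · have h := (hsol.isOptimalSplit j).le_card_maxMag_mul hlamS.le hlamB.le hj
    exact ((div_le_iff₀ hlamS).2 h).lt_of_ne (hne _)

/-- For any solution `(Ŝ, B̂)` of the dirty-model program, if `λ_b/λ_s`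
is not an integer, then every row of `Ŝ` has strictly fewer than `λ_b/λ_s` nonzero
entries, and for every row `j` in the row-support of `B̂`, the set `M_j(B̂)` has
strictly more than `λ_b/λ_s` elements. -/
theorem dirty_model_row_card_bounds
    (n p r : ℕ) (hn : 1 ≤ n) (hp : 1 ≤ p) (hr : 1 ≤ r)
    (X : Fin r → Matrix (Fin n) (Fin p) ℝ) (y : Fin r → Fin n → ℝ)
    (lamS lamB : ℝ) (hlamS : 0 < lamS) (hlamB : 0 < lamB)
    (hnotint : ¬ ∃ m : ℤ, lamB / lamS = (m : ℝ))
    (Shat Bhat : Matrix (Fin p) (Fin r) ℝ)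
    (hsol : IsDirtySol n p r X y lamS lamB Shat Bhat) :
    (∀ j : Fin p,
      ((Finset.univ.filter fun k => Shat j k ≠ 0).card : ℝ) < lamB / lamS) ∧
    (∀ j : Fin p, (∃ k, Bhat j k ≠ 0) →
      lamB / lamS < (maxMagSet Bhat j).card) :=
  dirty_model_row_card_bounds_general n p r X y lamS lamB hlamS hlamB hnotint Shat Bhat hsol
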